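/- Single-round two-prover probability invariance: let U₁, U₂ be Clifford unitaries, |ψ⟩ a shared state, and for queries q₁, q₂ and q̃₁, q̃₂ define R_i := U_i (X_{q_i⊕q̃_i} ⊗ I) U_i†. If the answers are related by |ã_i⟩⟨ã_i| = R_i |a_i⟩⟨a_i| R_i†, then |⟨a₁,a₂| (U₁⊗U₂) |q₁⟩|q₂⟩|ψ⟩|² = |⟨ã₁,ã₂| (U₁⊗U₂) |q̃₁⟩|q̃₂⟩|ψ⟩|². -/

import Mathlib

open Matrix Kronecker

namespace PauliPaper

noncomputable section

def X : Matrix (Fin 2) (Fin 2) ℂ := !![0, 1; 1, 0]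
def Y : Matrix (Fin 2) (Fin 2) ℂ := !![0, -Complex.I; Complex.I, 0]
def Z : Matrix (Fin 2) (Fin 2) ℂ := !![1, 0; 0, -1]

def phases : Set ℂ := {1, Complex.I, -1, -Complex.I}

def PauliSet : Set (Matrix (Fin 2) (Fin 2) ℂ) := {1, X, Y, Z}

/-- Entrywise formula for the `n`-fold Kronecker (tensor) product of `2 × 2` matrices. -/
def tensorPauli {n : ℕ} (P : Fin n → Matrix (Fin 2) (Fin 2) ℂ) :
    Matrix (Fin n → Fin 2) (Fin n → Fin 2) ℂ :=
  Matrix.of fun a b => ∏ i, P i (a i) (b i)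

/-- The `n`-qubit Pauli group: phased tensor products of `I, X, Y, Z`. -/
def PauliGroup (n : ℕ) : Set (Matrix (Fin n → Fin 2) (Fin n → Fin 2) ℂ) :=
  { M | ∃ c ∈ phases, ∃ P : Fin n → Matrix (Fin 2) (Fin 2) ℂ,
      (∀ i, P i ∈ PauliSet) ∧ M = c • tensorPauli P }

/-- The `n`-qubit Clifford group: unitaries normalizing the Pauli group. -/
def Clifford (n : ℕ) : Set (Matrix (Fin n → Fin 2) (Fin n → Fin 2) ℂ) :=
  { U | U ∈ Matrix.unitaryGroup (Fin n → Fin 2) ℂ ∧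
      (fun P => U * P * Uᴴ) '' PauliGroup n = PauliGroup n }

/-- Standard basis vector indexed by `a`. -/
def ket {α : Type*} [DecidableEq α] (a : α) : α → ℂ := fun i => if i = a then 1 else 0

/-- Rank-one projector `|a⟩⟨a|` onto the standard basis vector indexed by `a`. -/
def ketbra {α : Type*} [DecidableEq α] (a : α) : Matrix α α ℂ :=
  Matrix.of fun i j => if i = a ∧ j = a then 1 else 0

/-- `X_{x ⊕ y}`: tensor `X` where the bit-strings differ, identity elsewhere. -/
def XCorr {n : ℕ} (x y : Fin n → Fin 2) : Matrix (Fin n → Fin 2) (Fin n → Fin 2) ℂ :=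
  tensorPauli (fun i => if x i ≠ y i then X else 1)

def splitEquiv (n m : ℕ) : (Fin (n + m) → Fin 2) ≃ (Fin n → Fin 2) × (Fin m → Fin 2) :=
  (Equiv.arrowCongr finSumFinEquiv.symm (Equiv.refl _)).trans
    (Equiv.sumArrowEquivProdArrow _ _ _)

/-- Kronecker product of an `n`-qubit and an `m`-qubit operator as an `(n+m)`-qubit operator. -/
def kron {n m : ℕ} (M : Matrix (Fin n → Fin 2) (Fin n → Fin 2) ℂ)
    (N : Matrix (Fin m → Fin 2) (Fin m → Fin 2) ℂ) :
    Matrix (Fin (n + m) → Fin 2) (Fin (n + m) → Fin 2) ℂ :=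
  Matrix.of fun a b =>
    M (splitEquiv n m a).1 (splitEquiv n m b).1 * N (splitEquiv n m a).2 (splitEquiv n m b).2

/-- The initial pure state `|q₁⟩|q₂⟩|ψ⟩`: each prover `i` holds an `s`-qubit query
register storing `qᵢ` together with its `nᵢ`-qubit share of `ψ`. -/
def inState (s n₁ n₂ : ℕ) (q₁ q₂ : Fin s → Fin 2)
    (ψ : (Fin n₁ → Fin 2) × (Fin n₂ → Fin 2) → ℂ) :
    ((Fin s → Fin 2) × (Fin n₁ → Fin 2)) × ((Fin s → Fin 2) × (Fin n₂ → Fin 2)) → ℂ :=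
  fun p => (if p.1.1 = q₁ then 1 else 0) * (if p.2.1 = q₂ then 1 else 0) * ψ (p.1.2, p.2.2)

/-
Since `X_{q ⊕ q̃} ⊗ I` maps `|q̃⟩` to `|q⟩` and `U (X_{q ⊕ q̃} ⊗ I) = R U` for unitary `U`, the
state `(U₁ ⊗ U₂)|q₁⟩|q₂⟩|ψ⟩` is `R₁ ⊗ R₂` applied to `(U₁ ⊗ U₂)|q̃₁⟩|q̃₂⟩|ψ⟩`. The operator
`R₁ ⊗ R₂` is Hermitian and maps `|a₁,a₂⟩⟨a₁,a₂|` to `|ã₁,ã₂⟩⟨ã₁,ã₂|`, so its row `(a₁,a₂)` is a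
phase times `⟨ã₁,ã₂|`; hence the two amplitudes differ by a phase.
-/

lemma mem_unitaryGroup_of_reindex {m n α : Type*} [Fintype m] [DecidableEq m] [Fintype n]
    [DecidableEq n] [CommRing α] [StarRing α] (e : m ≃ n) {U : Matrix m m α}
    (h : reindex e e U ∈ unitaryGroup n α) : U ∈ unitaryGroup m α := by
  rw [mem_unitaryGroup_iff'] at h ⊢
  rw [star_eq_conjTranspose, conjTranspose_reindex, reindex_apply, reindex_apply,
    submatrix_mul_equiv, ← submatrix_one_equiv e.symm] at h
  exact (reindex e e).injective h

lemma mul_eq_conj_mul_of_mem_unitaryGroup {m α : Type*} [Fintype m] [DecidableEq m] [CommRing α]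
    [StarRing α] {U : Matrix m m α} (hU : U ∈ unitaryGroup m α) (A : Matrix m m α) :
    U * A = U * A * Uᴴ * U := by
  rw [Matrix.mul_assoc _ Uᴴ, ← star_eq_conjTranspose, mem_unitaryGroup_iff'.mp hU, Matrix.mul_one]

lemma _root_.Matrix.IsHermitian.kronecker {m n α : Type*} [CommRing α] [StarRing α]
    {A : Matrix m m α} {B : Matrix n n α} (hA : A.IsHermitian) (hB : B.IsHermitian) :
    (A ⊗ₖ B).IsHermitian := by
  rw [IsHermitian, conjTranspose_kronecker, hA.eq, hB.eq]

lemma ketbra_kronecker {m n : Type*} [DecidableEq m] [DecidableEq n] (a : m) (b : n) :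
    ketbra a ⊗ₖ ketbra b = ketbra (a, b) := by
  ext ⟨i, j⟩ ⟨k, l⟩
  simp only [ketbra, kroneckerMap_apply, of_apply, ite_zero_mul_ite_zero, mul_one, Prod.mk.injEq,
    and_and_and_comm]

lemma ketbra_eq_conj_kronecker {m n : Type*} [Fintype m] [DecidableEq m] [Fintype n]
    [DecidableEq n] {R₁ : Matrix m m ℂ} {R₂ : Matrix n n ℂ} {a₁ b₁ : m} {a₂ b₂ : n}
    (h₁ : ketbra b₁ = R₁ * ketbra a₁ * R₁ᴴ) (h₂ : ketbra b₂ = R₂ * ketbra a₂ * R₂ᴴ) :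
    ketbra (b₁, b₂) = (R₁ ⊗ₖ R₂) * ketbra (a₁, a₂) * (R₁ ⊗ₖ R₂)ᴴ := by
  rw [← ketbra_kronecker, ← ketbra_kronecker, h₁, h₂, conjTranspose_kronecker, mul_kronecker_mul,
    mul_kronecker_mul]

section ConjKetbra

variable {α : Type*} [Fintype α] [DecidableEq α] {R : Matrix α α ℂ} {a b : α}

lemma conj_ketbra_apply (i j : α) :
    (R * ketbra a * Rᴴ) i j = R i a * star (R j a) := by
  simp [mul_apply, ketbra, ite_and, Finset.sum_ite_eq']

lemma normSq_apply_of_ketbra_eq_conj (h : ketbra b = R * ketbra a * Rᴴ) (i : α) :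
    (Complex.normSq (R i a) : ℂ) = if i = b then 1 else 0 := by
  have hii := congrFun₂ h i i
  rw [conj_ketbra_apply, Complex.star_def, Complex.mul_conj] at hii
  simpa [ketbra] using hii.symm

lemma apply_eq_zero_of_ketbra_eq_conj (h : ketbra b = R * ketbra a * Rᴴ) {i : α} (hi : i ≠ b) :
    R i a = 0 := by
  simpa [hi] using normSq_apply_of_ketbra_eq_conj h i

lemma norm_apply_of_ketbra_eq_conj (h : ketbra b = R * ketbra a * Rᴴ) : ‖R b a‖ = 1 := by
  have hbb := normSq_apply_of_ketbra_eq_conj h b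
  simp only [if_true, Complex.normSq_eq_norm_sq] at hbb
  exact (pow_eq_one_iff_of_nonneg (norm_nonneg _) two_ne_zero).mp (by exact_mod_cast hbb)

lemma norm_mulVec_apply_of_ketbra_eq_conj (hR : R.IsHermitian) (h : ketbra b = R * ketbra a * Rᴴ)
    (w : α → ℂ) : ‖(R *ᵥ w) a‖ = ‖w b‖ := by
  have hrow : ∀ j, R a j = star (R j a) := fun j => (hR.apply a j).symm
  have hsingle : (R *ᵥ w) a = R a b * w b := by
    rw [mulVec, dotProduct, Finset.sum_eq_single b (fun j _ hj => ?_) (by simp)]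
    rw [hrow, apply_eq_zero_of_ketbra_eq_conj h hj, star_zero, zero_mul]
  rw [hsingle, norm_mul, hrow, norm_star, norm_apply_of_ketbra_eq_conj h, one_mul]

end ConjKetbra

lemma X_isHermitian : X.IsHermitian := by
  ext i j
  fin_cases i <;> fin_cases j <;> simp [X]

lemma tensorPauli_isHermitian {n : ℕ} {P : Fin n → Matrix (Fin 2) (Fin 2) ℂ}
    (hP : ∀ i, (P i).IsHermitian) : (tensorPauli P).IsHermitian := by
  ext a b
  simp only [tensorPauli, conjTranspose_apply, of_apply, star_prod, (hP _).apply]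

lemma XCorr_isHermitian {n : ℕ} (x y : Fin n → Fin 2) : (XCorr x y).IsHermitian :=
  tensorPauli_isHermitian fun i => by
    split_ifs
    exacts [X_isHermitian, isHermitian_one]

lemma XCorr_apply_right {n : ℕ} (x y z : Fin n → Fin 2) :
    XCorr x y z y = if z = x then 1 else 0 := by
  have hfactor : ∀ i, (if x i ≠ y i then X else 1) (z i) (y i) = if z i = x i then 1 else 0 := by
    intro i
    generalize x i = u, y i = v, z i = w
    fin_cases u <;> fin_cases v <;> fin_cases w <;> simp [X, one_apply]
  simp only [XCorr, tensorPauli, of_apply, hfactor, Finset.prod_boole, Finset.mem_univ,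
    true_implies, funext_iff]

lemma XCorr_kronecker_mulVec_inState (s n₁ n₂ : ℕ) (q₁ q₂ qt₁ qt₂ : Fin s → Fin 2)
    (ψ : (Fin n₁ → Fin 2) × (Fin n₂ → Fin 2) → ℂ) :
    ((XCorr q₁ qt₁ ⊗ₖ (1 : Matrix (Fin n₁ → Fin 2) (Fin n₁ → Fin 2) ℂ)) ⊗ₖ
        (XCorr q₂ qt₂ ⊗ₖ (1 : Matrix (Fin n₂ → Fin 2) (Fin n₂ → Fin 2) ℂ))) *ᵥ
        inState s n₁ n₂ qt₁ qt₂ ψ = inState s n₁ n₂ q₁ q₂ ψ := by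
  ext ⟨⟨x₁, y₁⟩, ⟨x₂, y₂⟩⟩
  simp [mulVec, dotProduct, inState, Fintype.sum_prod_type, one_apply, XCorr_apply_right]

/-- Single-round two-prover probability invariance. -/
theorem single_round_probability_invariance (s n₁ n₂ : ℕ)
    (U₁ : Matrix ((Fin s → Fin 2) × (Fin n₁ → Fin 2))
      ((Fin s → Fin 2) × (Fin n₁ → Fin 2)) ℂ)
    (U₂ : Matrix ((Fin s → Fin 2) × (Fin n₂ → Fin 2))
      ((Fin s → Fin 2) × (Fin n₂ → Fin 2)) ℂ)
    (hU₁ : Matrix.reindex (splitEquiv s n₁).symm (splitEquiv s n₁).symm U₁ ∈ Clifford (s + n₁))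
    (hU₂ : Matrix.reindex (splitEquiv s n₂).symm (splitEquiv s n₂).symm U₂ ∈ Clifford (s + n₂))
    (ψ : (Fin n₁ → Fin 2) × (Fin n₂ → Fin 2) → ℂ)
    (q₁ q₂ qt₁ qt₂ : Fin s → Fin 2)
    (R₁ : Matrix ((Fin s → Fin 2) × (Fin n₁ → Fin 2))
      ((Fin s → Fin 2) × (Fin n₁ → Fin 2)) ℂ)
    (hR₁ : R₁ = U₁ * (XCorr q₁ qt₁ ⊗ₖ (1 : Matrix (Fin n₁ → Fin 2) (Fin n₁ → Fin 2) ℂ)) * U₁ᴴ)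
    (R₂ : Matrix ((Fin s → Fin 2) × (Fin n₂ → Fin 2))
      ((Fin s → Fin 2) × (Fin n₂ → Fin 2)) ℂ)
    (hR₂ : R₂ = U₂ * (XCorr q₂ qt₂ ⊗ₖ (1 : Matrix (Fin n₂ → Fin 2) (Fin n₂ → Fin 2) ℂ)) * U₂ᴴ)
    (a₁ at₁ : (Fin s → Fin 2) × (Fin n₁ → Fin 2))
    (a₂ at₂ : (Fin s → Fin 2) × (Fin n₂ → Fin 2))
    (ha₁ : ketbra at₁ = R₁ * ketbra a₁ * R₁ᴴ)
    (ha₂ : ketbra at₂ = R₂ * ketbra a₂ * R₂ᴴ) :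
    ‖((U₁ ⊗ₖ U₂).mulVec (inState s n₁ n₂ q₁ q₂ ψ)) (a₁, a₂)‖ ^ 2 =
      ‖((U₁ ⊗ₖ U₂).mulVec (inState s n₁ n₂ qt₁ qt₂ ψ)) (at₁, at₂)‖ ^ 2 := by
  have hvec : (U₁ ⊗ₖ U₂) *ᵥ inState s n₁ n₂ q₁ q₂ ψ =
      (R₁ ⊗ₖ R₂) *ᵥ ((U₁ ⊗ₖ U₂) *ᵥ inState s n₁ n₂ qt₁ qt₂ ψ) := by
    rw [← XCorr_kronecker_mulVec_inState s n₁ n₂ q₁ q₂ qt₁ qt₂ ψ, mulVec_mulVec, mulVec_mulVec,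
      ← mul_kronecker_mul, ← mul_kronecker_mul, hR₁, hR₂,
      ← mul_eq_conj_mul_of_mem_unitaryGroup (mem_unitaryGroup_of_reindex _ hU₁.1),
      ← mul_eq_conj_mul_of_mem_unitaryGroup (mem_unitaryGroup_of_reindex _ hU₂.1)]
  have hR₁h : R₁.IsHermitian := hR₁ ▸
    isHermitian_mul_mul_conjTranspose U₁ ((XCorr_isHermitian q₁ qt₁).kronecker isHermitian_one)
  have hR₂h : R₂.IsHermitian := hR₂ ▸
    isHermitian_mul_mul_conjTranspose U₂ ((XCorr_isHermitian q₂ qt₂).kronecker isHermitian_one)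
  rw [hvec, norm_mulVec_apply_of_ketbra_eq_conj (hR₁h.kronecker hR₂h)
    (ketbra_eq_conj_kronecker ha₁ ha₂)]

end
end PauliPaper
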